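/- Suppose r₁ = r₃ = p and r₂ = r₄ = q with p > 5q > 0, so that K = 2(p−q) > 0. Then the set of common zeros of P and Q in ℝ² is exactly the five-point set {(0,0), (a,−a), (−a,a), (a′,a′), (−a′,−a′)}, where a = √(1 − 4q/(p−q)) satisfies 0 < a < 1 and a′ = √(5 + 4q/(p−q)) satisfies a′ > 1; in particular these five points are pairwise distinct and exactly three of them, namely (0,0), (a,−a) and (−a,a), lie in the open square S. -/

import Mathlib

noncomputable section

/-- `K = r₁ + r₃ − r₂ − r₄`. -/
def Kq (r₁ r₂ r₃ r₄ : ℝ) : ℝ := r₁ + r₃ - r₂ - r₄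

/-- `N(a₁,a₂) = a₁a₂K + a₁(K+2(r₂−r₃)) + a₂(K+2(r₄−r₃)) + K + 2(r₂+r₄)`. -/
def Nq (r₁ r₂ r₃ r₄ a₁ a₂ : ℝ) : ℝ :=
  a₁ * a₂ * Kq r₁ r₂ r₃ r₄ + a₁ * (Kq r₁ r₂ r₃ r₄ + 2 * (r₂ - r₃)) +
    a₂ * (Kq r₁ r₂ r₃ r₄ + 2 * (r₄ - r₃)) + Kq r₁ r₂ r₃ r₄ + 2 * (r₂ + r₄)

/-- `P(a₁,a₂) = 3(1−a₁²)·∂N/∂a₁ + 2a₁·N`, where `∂N/∂a₁ = a₂K + K + 2(r₂−r₃)`. -/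
def Pq (r₁ r₂ r₃ r₄ a₁ a₂ : ℝ) : ℝ :=
  3 * (1 - a₁ ^ 2) * (a₂ * Kq r₁ r₂ r₃ r₄ + (Kq r₁ r₂ r₃ r₄ + 2 * (r₂ - r₃))) +
    2 * a₁ * Nq r₁ r₂ r₃ r₄ a₁ a₂

/-- `Q(a₁,a₂) = 3(1−a₂²)·∂N/∂a₂ + 2a₂·N`, where `∂N/∂a₂ = a₁K + K + 2(r₄−r₃)`. -/
def Qq (r₁ r₂ r₃ r₄ a₁ a₂ : ℝ) : ℝ :=
  3 * (1 - a₂ ^ 2) * (a₁ * Kq r₁ r₂ r₃ r₄ + (Kq r₁ r₂ r₃ r₄ + 2 * (r₄ - r₃))) +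
    2 * a₂ * Nq r₁ r₂ r₃ r₄ a₁ a₂

/-- The open square `S = {(a₁,a₂) : |a₁| < 1, |a₂| < 1}`. -/
def Sq : Set (ℝ × ℝ) := {a | |a.1| < 1 ∧ |a.2| < 1}

/-- `G(a₁,a₂) = N(a₁,a₂)³ / ((1−a₁²)(1−a₂²))` on `S`. -/
def Gq (r₁ r₂ r₃ r₄ : ℝ) (a : ℝ × ℝ) : ℝ :=
  Nq r₁ r₂ r₃ r₄ a.1 a.2 ^ 3 / ((1 - a.1 ^ 2) * (1 - a.2 ^ 2))

/-!
For `r = (p, q, p, q)` we have `K = 2(p - q)`, and `P ∓ Q` factor as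
`2(y - x)((p - q)(3 + xy) - 2(p + q))` and `2(x + y)((p - q)(3 - xy) + 2(p + q))`.
The two second factors sum to `6(p - q) ≠ 0`, so a common zero other than the origin lies on
the antidiagonal, where `(p - q)x² = p - 5q`, or on the diagonal, where `(p - q)x² = 5p - q`.
-/
theorem Pq_sub_Qq_of_symm (p q x y : ℝ) :
    Pq p q p q x y - Qq p q p q x y = 2 * (y - x) * ((p - q) * (3 + x * y) - 2 * (p + q)) := by
  simp only [Pq, Qq, Nq, Kq]; ring

theorem Pq_add_Qq_of_symm (p q x y : ℝ) :
    Pq p q p q x y + Qq p q p q x y = 2 * (x + y) * ((p - q) * (3 - x * y) + 2 * (p + q)) := by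
  simp only [Pq, Qq, Nq, Kq]; ring

theorem Pq_eq_zero_and_Qq_eq_zero_iff {p q : ℝ} (hpq : p ≠ q) (x y : ℝ) :
    Pq p q p q x y = 0 ∧ Qq p q p q x y = 0 ↔
      (x = 0 ∧ y = 0) ∨ (y = -x ∧ (p - q) * x ^ 2 = p - 5 * q) ∨
        (y = x ∧ (p - q) * x ^ 2 = 5 * p - q) := by
  have hsub_add : Pq p q p q x y = 0 ∧ Qq p q p q x y = 0 ↔
      Pq p q p q x y - Qq p q p q x y = 0 ∧ Pq p q p q x y + Qq p q p q x y = 0 := by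
    constructor <;> rintro ⟨h₁, h₂⟩ <;> constructor <;> linarith
  rw [hsub_add, Pq_sub_Qq_of_symm, Pq_add_Qq_of_symm]
  constructor
  · rintro ⟨hdiff, hsum⟩
    rcases mul_eq_zero.mp hdiff with hyx | hdiff <;> rcases mul_eq_zero.mp hsum with hxy | hsum
    · left; constructor <;> linarith
    · right; right
      obtain rfl : y = x := by linarith
      exact ⟨rfl, by linear_combination -hsum⟩
    · right; left
      obtain rfl : y = -x := by linarith
      exact ⟨rfl, by linear_combination -hdiff⟩
    · exact absurd (by linear_combination (hdiff + hsum) / 6 : p = q) hpq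
  · rintro (⟨rfl, rfl⟩ | ⟨rfl, h⟩ | ⟨rfl, h⟩)
    · constructor <;> ring
    · constructor
      · linear_combination 4 * x * h
      · ring
    · constructor
      · ring
      · linear_combination -4 * y * h

theorem mul_sq_eq_iff_eq_sqrt_or_eq_neg_sqrt {c d s x : ℝ} (hc : c ≠ 0) (hs : 0 ≤ s)
    (hcs : c * s = d) : c * x ^ 2 = d ↔ x = √s ∨ x = -√s := by
  rw [← hcs, mul_right_inj' hc, ← sq_eq_sq_iff_eq_or_eq_neg, Real.sq_sqrt hs]

theorem setOf_Pq_eq_zero_and_Qq_eq_zero {p q s t : ℝ} (hqp : q < p) (hs : 0 ≤ s) (ht : 0 ≤ t)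
    (hs_eq : (p - q) * s = p - 5 * q) (ht_eq : (p - q) * t = 5 * p - q) :
    {x : ℝ × ℝ | Pq p q p q x.1 x.2 = 0 ∧ Qq p q p q x.1 x.2 = 0} =
      {((0 : ℝ), (0 : ℝ)), (√s, -√s), (-√s, √s), (√t, √t), (-√t, -√t)} := by
  have hc : p - q ≠ 0 := sub_ne_zero.mpr hqp.ne'
  ext ⟨x, y⟩
  change Pq p q p q x y = 0 ∧ Qq p q p q x y = 0 ↔ _
  rw [Pq_eq_zero_and_Qq_eq_zero_iff hqp.ne', mul_sq_eq_iff_eq_sqrt_or_eq_neg_sqrt hc hs hs_eq,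
    mul_sq_eq_iff_eq_sqrt_or_eq_neg_sqrt hc ht ht_eq]
  simp only [Set.mem_insert_iff, Set.mem_singleton_iff, Prod.mk.injEq]
  aesop

theorem ncard_origin_antidiagonal_diagonal_eq_five {a b : ℝ} (ha : 0 < a) (hab : a < b) :
    ({((0 : ℝ), (0 : ℝ)), (a, -a), (-a, a), (b, b), (-b, -b)} : Set (ℝ × ℝ)).ncard = 5 := by
  rw [Set.ncard_insert_of_notMem, Set.ncard_insert_of_notMem, Set.ncard_insert_of_notMem,
    Set.ncard_insert_of_notMem, Set.ncard_singleton] <;> grind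

theorem origin_antidiagonal_diagonal_inter_Sq {a b : ℝ} (ha : 0 < a) (ha1 : a < 1) (hb : 1 < b) :
    ({((0 : ℝ), (0 : ℝ)), (a, -a), (-a, a), (b, b), (-b, -b)} : Set (ℝ × ℝ)) ∩ Sq =
      {((0 : ℝ), (0 : ℝ)), (a, -a), (-a, a)} := by
  rw [Set.insert_inter_of_mem, Set.insert_inter_of_mem, Set.insert_inter_of_mem,
    Set.insert_inter_of_notMem, Set.singleton_inter_eq_empty.mpr] <;>
    simp [Sq, abs_of_pos ha, abs_of_pos (one_pos.trans hb), ha1, hb.le]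

/-- For `r₁ = r₃ = p`, `r₂ = r₄ = q` with `p > 5q > 0`, the set of common
zeros of `P` and `Q` in `ℝ²` is exactly the five-point set
`{(0,0), (a,−a), (−a,a), (a′,a′), (−a′,−a′)}`, where `a = √(1 − 4q/(p−q)) ∈ (0,1)` and
`a′ = √(5 + 4q/(p−q)) > 1`; in particular these five points are pairwise distinct and
exactly three of them, `(0,0)`, `(a,−a)`, `(−a,a)`, lie in the open square `S`. -/
theorem stmt16 (p q : ℝ) (hq : 0 < q) (hpq : 5 * q < p) :
    {x : ℝ × ℝ | Pq p q p q x.1 x.2 = 0 ∧ Qq p q p q x.1 x.2 = 0} =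
        {((0 : ℝ), (0 : ℝ)),
          (Real.sqrt (1 - 4 * q / (p - q)), -Real.sqrt (1 - 4 * q / (p - q))),
          (-Real.sqrt (1 - 4 * q / (p - q)), Real.sqrt (1 - 4 * q / (p - q))),
          (Real.sqrt (5 + 4 * q / (p - q)), Real.sqrt (5 + 4 * q / (p - q))),
          (-Real.sqrt (5 + 4 * q / (p - q)), -Real.sqrt (5 + 4 * q / (p - q)))} ∧
      0 < Real.sqrt (1 - 4 * q / (p - q)) ∧ Real.sqrt (1 - 4 * q / (p - q)) < 1 ∧
      1 < Real.sqrt (5 + 4 * q / (p - q)) ∧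
      ({((0 : ℝ), (0 : ℝ)),
          (Real.sqrt (1 - 4 * q / (p - q)), -Real.sqrt (1 - 4 * q / (p - q))),
          (-Real.sqrt (1 - 4 * q / (p - q)), Real.sqrt (1 - 4 * q / (p - q))),
          (Real.sqrt (5 + 4 * q / (p - q)), Real.sqrt (5 + 4 * q / (p - q))),
          (-Real.sqrt (5 + 4 * q / (p - q)), -Real.sqrt (5 + 4 * q / (p - q)))} :
            Set (ℝ × ℝ)).ncard = 5 ∧
      {x : ℝ × ℝ | Pq p q p q x.1 x.2 = 0 ∧ Qq p q p q x.1 x.2 = 0} ∩ Sq =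
        {((0 : ℝ), (0 : ℝ)),
          (Real.sqrt (1 - 4 * q / (p - q)), -Real.sqrt (1 - 4 * q / (p - q))),
          (-Real.sqrt (1 - 4 * q / (p - q)), Real.sqrt (1 - 4 * q / (p - q)))} := by
  have hqp : q < p := by linarith
  have hc : 0 < p - q := sub_pos.mpr hqp
  have hratio : 0 < 4 * q / (p - q) := by positivity
  have hsmall : 0 < 1 - 4 * q / (p - q) := by rw [sub_pos, div_lt_one hc]; linarith
  have ha : 0 < √(1 - 4 * q / (p - q)) := Real.sqrt_pos.mpr hsmall
  have ha1 : √(1 - 4 * q / (p - q)) < 1 := (Real.sqrt_lt' one_pos).mpr (by linarith)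
  have ha' : 1 < √(5 + 4 * q / (p - q)) := (Real.lt_sqrt zero_le_one).mpr (by linarith)
  have hzeros := setOf_Pq_eq_zero_and_Qq_eq_zero (s := 1 - 4 * q / (p - q))
    (t := 5 + 4 * q / (p - q)) hqp hsmall.le (by positivity) (by field_simp; ring)
    (by field_simp; ring)
  refine ⟨hzeros, ha, ha1, ha', ncard_origin_antidiagonal_diagonal_eq_five ha (ha1.trans ha'), ?_⟩
  rw [hzeros, origin_antidiagonal_diagonal_inter_Sq ha ha1 ha']
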